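/- arXiv:1406.3813 — 5 statements merged into one kernel-verified Lean document; each statement's English description precedes it below -/
import Mathlib

section
/- Every direct summand of a CS-Rickart module is a CS-Rickart module, and every direct summand of a d-CS-Rickart module is a d-CS-Rickart module. -/
namespace CSRickartPaper

section Defs

variable {R : Type*} [Ring R] {M : Type*} [AddCommGroup M] [Module R M]

/-- `N` is an essential submodule of `P` (inside the ambient module `M`):
`N ≤ P` and every submodule of `P` intersecting `N` trivially is zero. -/
def EssentialIn (N P : Submodule R M) : Prop :=
  N ≤ P ∧ ∀ K : Submodule R M, K ≤ P → N ⊓ K = ⊥ → K = ⊥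

/-- `N` is a small (superfluous) submodule of `P`. -/
def SmallIn (N P : Submodule R M) : Prop :=
  N ≤ P ∧ ∀ K : Submodule R M, K ≤ P → N ⊔ K = P → K = P

/-- `N` is a direct summand of `M`. -/
def IsDirectSummand (N : Submodule R M) : Prop :=
  ∃ K : Submodule R M, IsCompl N K

/-- `N` lies above the direct summand `D` of `M`: `M = D ⊕ K`, `D ≤ N` and
`N ⊓ K` is small in `K`. -/
def LiesAbove (N D : Submodule R M) : Prop :=
  ∃ K : Submodule R M, IsCompl D K ∧ D ≤ N ∧ SmallIn (N ⊓ K) K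

/-- `N` lies above a direct summand of `M`. -/
def LiesAboveSummand (N : Submodule R M) : Prop :=
  ∃ D : Submodule R M, LiesAbove N D

end Defs

section ModuleDefs

variable (R : Type*) [Ring R] (M : Type*) [AddCommGroup M] [Module R M]

/-- `M` is a CS-Rickart module: the kernel of every endomorphism is essential
in a direct summand `eM`, `e` an idempotent endomorphism. -/
def IsCSRickart : Prop :=
  ∀ φ : Module.End R M, ∃ e : Module.End R M, IsIdempotentElem e ∧
    EssentialIn (LinearMap.ker φ) (LinearMap.range e)

/-- `M` is a d-CS-Rickart module: the image of every endomorphism lies above a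
direct summand of `M`. -/
def IsDCSRickart : Prop :=
  ∀ φ : Module.End R M, LiesAboveSummand (LinearMap.range φ)

/-- `M` is a Rickart module. -/
def IsRickart : Prop :=
  ∀ φ : Module.End R M, ∃ e : Module.End R M, IsIdempotentElem e ∧
    LinearMap.ker φ = LinearMap.range e

/-- `M` is a dual Rickart module. -/
def IsDRickart : Prop :=
  ∀ φ : Module.End R M, ∃ e : Module.End R M, IsIdempotentElem e ∧
    LinearMap.range φ = LinearMap.range e

/-- `M` is a CS (extending) module. -/
def IsCSModule : Prop :=
  ∀ N : Submodule R M, ∃ D : Submodule R M, IsDirectSummand D ∧ EssentialIn N D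

/-- `M` is a lifting (d-CS) module. -/
def IsLifting : Prop :=
  ∀ N : Submodule R M, LiesAboveSummand N

/-- `M` is a singular module: the annihilator of every element is an essential
ideal of `R`. -/
def IsSingularModule : Prop :=
  ∀ m : M, EssentialIn (LinearMap.ker (LinearMap.toSpanSingleton R M m)) (⊤ : Submodule R R)

/-- `M` is uniform: every nonzero submodule is essential. -/
def IsUniformModule : Prop :=
  ∀ N : Submodule R M, N ≠ ⊥ → EssentialIn N (⊤ : Submodule R M)

/-- `M` satisfies the C₂ condition: every submodule isomorphic to a direct
summand is itself a direct summand. -/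
def IsC2 : Prop :=
  ∀ N D : Submodule R M, IsDirectSummand D → Nonempty (N ≃ₗ[R] D) → IsDirectSummand N

/-- `M` is K-nonsingular. -/
def IsKNonsingular : Prop :=
  ∀ φ : Module.End R M, ∀ N : Submodule R M, EssentialIn N (⊤ : Submodule R M) →
    N ≤ LinearMap.ker φ → φ = 0

/-- `M` is T-noncosingular. -/
def IsTNoncosingular : Prop :=
  ∀ φ : Module.End R M, φ ≠ 0 → ¬ SmallIn (LinearMap.range φ) (⊤ : Submodule R M)

/-- `M` is an SIP-CS module. -/
def IsSIPCS : Prop :=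
  ∀ A B : Submodule R M, IsDirectSummand A → IsDirectSummand B →
    ∃ D : Submodule R M, IsDirectSummand D ∧ EssentialIn (A ⊓ B) D

/-- `M` is an SSP-d-CS module. -/
def IsSSPdCS : Prop :=
  ∀ A B : Submodule R M, IsDirectSummand A → IsDirectSummand B →
    LiesAboveSummand (A ⊔ B)

end ModuleDefs

section RelDefs

variable (R : Type*) [Ring R] (M N : Type*) [AddCommGroup M] [Module R M]
  [AddCommGroup N] [Module R N]

/-- `M` is relatively CS-Rickart to `N`. -/
def IsRelCSRickart : Prop :=
  ∀ φ : M →ₗ[R] N, ∃ e : Module.End R M, IsIdempotentElem e ∧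
    EssentialIn (LinearMap.ker φ) (LinearMap.range e)

/-- `M` is relatively d-CS-Rickart to `N`. -/
def IsRelDCSRickart : Prop :=
  ∀ φ : M →ₗ[R] N, LiesAboveSummand (LinearMap.range φ)

/-- `N` is `M`-injective. -/
def IsRelInjective : Prop :=
  ∀ (A : Submodule R M) (f : A →ₗ[R] N), ∃ g : M →ₗ[R] N, ∀ a : A, g a = f a

end RelDefs

section RingDefs

variable (R : Type*) [Ring R]

/-- The annihilator of an element `a` of `R`, as an ideal (kernel of `r ↦ r • a`). -/
def annElem (a : R) : Submodule R R :=
  LinearMap.ker (LinearMap.toSpanSingleton R R a)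

/-- The annihilator of a subset `X` of `R`. -/
def annSet (X : Set R) : Submodule R R :=
  ⨅ x ∈ X, annElem R x

/-- The principal ideal generated by `e`, i.e. the image of `r ↦ r • e`. -/
def idealGen (e : R) : Submodule R R :=
  LinearMap.range (LinearMap.toSpanSingleton R R e)

/-- `R` is an ACS ring: the annihilator of every element is essential in a
direct summand `eR` of `R`. -/
def IsACSRing : Prop :=
  ∀ a : R, ∃ e : R, IsIdempotentElem e ∧ EssentialIn (annElem R a) (idealGen R e)

/-- `R` is an essentially Baer ring. -/
def IsEssentiallyBaer : Prop :=
  ∀ X : Set R, X.Nonempty → ∃ e : R, IsIdempotentElem e ∧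
    EssentialIn (annSet R X) (idealGen R e)

/-- The Jacobson radical of the ring `R`. -/
noncomputable def jacRad : Ideal R := Ideal.jacobson (⊥ : Ideal R)

/-- `R` is semiregular: `R/J(R)` is von Neumann regular and idempotents lift
modulo `J(R)` (stated elementwise). -/
def IsSemiregularRing : Prop :=
  (∀ a : R, ∃ b : R, a - a * b * a ∈ jacRad R) ∧
  (∀ a : R, a - a * a ∈ jacRad R →
    ∃ e : R, IsIdempotentElem e ∧ e - a ∈ jacRad R)

/-- `J(R)` coincides with the singular ideal `Z(R)`. -/
def JacEqSingular : Prop :=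
  ∀ a : R, a ∈ jacRad R ↔ EssentialIn (annElem R a) (⊤ : Submodule R R)

end RingDefs

section GenDefs

variable {R : Type*} [Ring R] {M : Type*} [AddCommGroup M] [Module R M]

/-- A submodule is `n`-generated if it is spanned by at most `n` elements. -/
def NGen (n : ℕ) (N : Submodule R M) : Prop :=
  ∃ f : Fin n → M, Submodule.span R (Set.range f) = N

end GenDefs

end CSRickartPaper

/-!
Write `M = N ⊕ K` and extend `φ ∈ End N` by zero on `K`. The extension has kernel
`ker φ ⊕ K`; if this is essential in a summand `E` of `M`, then `E ⊇ K`, so by modularity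
`E ∩ N` is a summand of `N`, and essentiality restricts to `N`. The extension has the same
image as `φ`; if it lies above `D` with `M = D ⊕ K'`, then `N = D ⊕ (K' ∩ N)`, and
smallness passes from `K'` to `K' ∩ N` because `K' ∩ N` is itself a summand of `M`, with
complement `D ⊕ K`.
-/

namespace CSRickartPaper

open Submodule LinearMap

theorem isCompl_inf_sup_of_le {α : Type*} [Lattice α] [BoundedOrder α] [IsModularLattice α]
    {v x k c : α} (hvx : v ≤ x) (hvk : IsCompl v k) (hxc : IsCompl x c) :
    IsCompl (k ⊓ x) (v ⊔ c) := by
  have hx : k ⊓ x ⊔ v = x := by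
    rw [sup_comm, ← sup_inf_assoc_of_le k hvx, hvk.sup_eq_top, top_inf_eq]
  exact (hvk.disjoint.symm.mono_left inf_le_left).isCompl_sup_right_of_isCompl_sup_left
    (by rwa [hx])

section

variable {R : Type*} [Ring R] {M : Type*} [AddCommGroup M] [Module R M]

theorem EssentialIn.comap {M' : Type*} [AddCommGroup M'] [Module R M'] {A E : Submodule R M}
    (h : EssentialIn A E) {f : M' →ₗ[R] M} (hf : Function.Injective f) :
    EssentialIn (A.comap f) (E.comap f) := by
  refine ⟨comap_mono h.1, fun T hT hAT => map_injective_of_injective hf ?_⟩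
  refine (h.2 _ (map_le_iff_le_comap.2 hT) (eq_bot_iff.2 ?_)).trans (map_bot f).symm
  rintro _ ⟨hA, t, ht, rfl⟩
  have ht0 : t = 0 := (mem_bot R).1 (hAT ▸ ⟨hA, ht⟩)
  rw [ht0, map_zero]
  exact zero_mem _

theorem SmallIn.of_le_of_isCompl {S P T C : Submodule R M} (h : SmallIn S P) (hST : S ≤ T)
    (hTC : IsCompl T C) : SmallIn S T := by
  refine ⟨hST, fun U hUT hSU => ?_⟩
  have hP : (U ⊔ C) ⊓ P = P := by
    refine h.2 _ inf_le_right ?_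
    rw [← sup_inf_assoc_of_le _ h.1, ← sup_assoc, hSU, hTC.sup_eq_top, top_inf_eq]
  have hTU : T ≤ U ⊔ C := hSU ▸ sup_le (h.1.trans (hP ▸ inf_le_left)) le_sup_left
  calc U = U ⊔ C ⊓ T := by rw [inf_comm, hTC.inf_eq_bot, sup_bot_eq]
    _ = (U ⊔ C) ⊓ T := (sup_inf_assoc_of_le C hUT).symm
    _ = T := inf_eq_right.2 hTU

theorem SmallIn.comap_subtype {N S T : Submodule R M} (h : SmallIn S T) (hTN : T ≤ N) :
    SmallIn (S.comap N.subtype) (T.comap N.subtype) := by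
  refine ⟨comap_mono h.1, fun U hU hSU => ?_⟩
  have hmap : S ⊔ U.map N.subtype = T := by
    have := congrArg (map N.subtype) hSU
    rwa [Submodule.map_sup, map_comap_subtype, map_comap_subtype,
      inf_eq_right.2 (h.1.trans hTN), inf_eq_right.2 hTN] at this
  rw [← h.2 _ (map_le_iff_le_comap.2 hU) hmap, comap_map_eq_of_injective N.injective_subtype]

theorem LiesAbove.comap_subtype {N K X D : Submodule R M} (hNK : IsCompl N K) (hXN : X ≤ N)
    (h : LiesAbove X D) : LiesAbove (X.comap N.subtype) (D.comap N.subtype) := by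
  obtain ⟨K', hDK', hDX, hsmall⟩ := h
  have hDN : D ≤ N := hDX.trans hXN
  refine ⟨K'.comap N.subtype, isCompl_comap_subtype_of_isCompl_of_le hDK' hDN,
    comap_mono hDX, ?_⟩
  have hsmallN : SmallIn (X ⊓ K') (K' ⊓ N) :=
    hsmall.of_le_of_isCompl (le_inf inf_le_right (inf_le_left.trans hXN))
      (isCompl_inf_sup_of_le hDN hDK' hNK)
  simpa only [comap_inf, comap_subtype_self, inf_top_eq] using
    hsmallN.comap_subtype inf_le_right

variable {N K : Submodule R M}

noncomputable def extendByZero (hNK : IsCompl N K) (φ : Module.End R N) : Module.End R M :=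
  N.subtype ∘ₗ φ ∘ₗ N.projectionOnto K hNK

theorem comap_subtype_ker_extendByZero (hNK : IsCompl N K) (φ : Module.End R N) :
    (ker (extendByZero hNK φ)).comap N.subtype = ker φ := by
  ext x
  simp [extendByZero]

theorem le_ker_extendByZero (hNK : IsCompl N K) (φ : Module.End R N) :
    K ≤ ker (extendByZero hNK φ) := by
  intro k hk
  simp [extendByZero, projectionOnto_apply_of_mem_right hNK hk]

theorem range_extendByZero (hNK : IsCompl N K) (φ : Module.End R N) :
    range (extendByZero hNK φ) = (range φ).map N.subtype := by
  rw [extendByZero, range_comp, range_comp_of_range_eq_top _ (range_projectionOnto hNK)]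

theorem IsCSRickart.of_isCompl (hNK : IsCompl N K) (hM : IsCSRickart R M) :
    IsCSRickart R N := by
  intro φ
  obtain ⟨e, he, hess⟩ := hM (extendByZero hNK φ)
  have hKE : K ≤ range e := (le_ker_extendByZero hNK φ).trans hess.1
  have hcompl : IsCompl ((N ⊓ range e).comap N.subtype) ((K ⊔ ker e).comap N.subtype) :=
    isCompl_comap_subtype_of_isCompl_of_le
      (isCompl_inf_sup_of_le hKE hNK.symm he.isCompl) inf_le_left
  refine ⟨_, isIdempotentElem_projection hcompl, ?_⟩
  rw [range_projection, comap_inf, comap_subtype_self, top_inf_eq,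
    ← comap_subtype_ker_extendByZero hNK φ]
  exact hess.comap N.injective_subtype

theorem IsDCSRickart.of_isCompl (hNK : IsCompl N K) (hM : IsDCSRickart R M) :
    IsDCSRickart R N := by
  intro φ
  obtain ⟨D, hD⟩ := hM (extendByZero hNK φ)
  rw [range_extendByZero] at hD
  refine ⟨D.comap N.subtype, ?_⟩
  simpa only [comap_map_eq_of_injective N.injective_subtype] using
    hD.comap_subtype hNK (map_subtype_le _ _)

end

/-- Every direct summand of a CS-Rickart module is CS-Rickart, and every direct
summand of a d-CS-Rickart module is d-CS-Rickart. -/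
theorem directSummand_csRickart_dcsRickart
    {R : Type*} [Ring R] {M : Type*} [AddCommGroup M] [Module R M]
    (N : Submodule R M) (hN : IsDirectSummand N) :
    (IsCSRickart R M → IsCSRickart R N) ∧ (IsDCSRickart R M → IsDCSRickart R N) := by
  obtain ⟨K, hNK⟩ := hN
  exact ⟨fun hM => hM.of_isCompl hNK, fun hM => hM.of_isCompl hNK⟩

end CSRickartPaper
end

section
/- For a right R-module M, the following are equivalent: (1) M is a K-nonsingular CS-Rickart module; (2) M is a Rickart module. -/
/-!
A Rickart kernel `eM` is a direct summand, and a direct summand that is essential in `M` is all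
of `M`; this gives K-nonsingularity, and CS-Rickartness is trivial. Conversely, if `ker φ` is
essential in `eM`, then `ker φ ⊕ (1 - e)M` is essential in `M` and is killed by `φ e`, so
K-nonsingularity forces `φ e = 0`, i.e. `eM ≤ ker φ`.
-/

namespace CSRickartPaper

section Essential

variable {R : Type*} [Ring R] {M : Type*} [AddCommGroup M] [Module R M]
  {N N' A B : Submodule R M}

theorem essentialIn_self (N : Submodule R M) : EssentialIn N N :=
  ⟨le_rfl, fun _ hK hNK => by rwa [inf_eq_right.mpr hK] at hNK⟩

theorem EssentialIn.mono {P : Submodule R M} (hN : EssentialIn N P) (hNN' : N ≤ N')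
    (hN'P : N' ≤ P) : EssentialIn N' P :=
  ⟨hN'P, fun K hK hN'K => hN.2 K hK (le_bot_iff.mp (hN'K ▸ inf_le_inf_right K hNN'))⟩

theorem EssentialIn.eq_top_of_isCompl (hA : EssentialIn A ⊤) (hAB : IsCompl A B) :
    A = ⊤ := by
  simpa [hA.2 B le_top hAB.inf_eq_bot] using hAB.sup_eq_top

theorem EssentialIn.sup_essentialIn_top_of_isCompl (hN : EssentialIn N A) (hAB : IsCompl A B) :
    EssentialIn (N ⊔ B) ⊤ := by
  refine ⟨le_top, fun K _ hK => ?_⟩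
  have hNBK : Disjoint N (B ⊔ K) :=
    (hAB.disjoint.mono_left hN.1).disjoint_sup_right_of_disjoint_sup_left (disjoint_iff.mpr hK)
  -- `(K ⊔ B) ⊓ A` is the projection of `K` to `A` along `B`.
  have hproj : (K ⊔ B) ⊓ A = ⊥ :=
    hN.2 _ inf_le_right (disjoint_iff.mp (hNBK.mono_right (sup_comm B K ▸ inf_le_left)))
  have hKB : K ≤ B :=
    calc K ≤ (B ⊔ A) ⊓ (K ⊔ B) := le_inf (by simp [hAB.symm.sup_eq_top]) le_sup_left
      _ = B ⊔ A ⊓ (K ⊔ B) := sup_inf_assoc_of_le _ le_sup_right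
      _ = B := by rw [inf_comm, hproj, sup_bot_eq]
  rwa [inf_eq_right.mpr (hKB.trans le_sup_right)] at hK

end Essential

section Rickart

open LinearMap

variable {R : Type*} [Ring R] {M : Type*} [AddCommGroup M] [Module R M]

theorem IsRickart.isCSRickart (hM : IsRickart R M) : IsCSRickart R M := fun φ => by
  obtain ⟨e, he, hker⟩ := hM φ
  exact ⟨e, he, hker ▸ essentialIn_self _⟩

theorem IsRickart.isKNonsingular (hM : IsRickart R M) : IsKNonsingular R M := by
  intro φ N hN hNφ
  obtain ⟨e, he, hker⟩ := hM φ
  have hrange : range e = ⊤ :=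
    (hN.mono (hker ▸ hNφ) le_top).eq_top_of_isCompl (IsIdempotentElem.isCompl he)
  exact ker_eq_top.mp (hker.trans hrange)

theorem IsCSRickart.isRickart (hCS : IsCSRickart R M) (hK : IsKNonsingular R M) :
    IsRickart R M := by
  intro φ
  obtain ⟨e, he, hess⟩ := hCS φ
  have hφe_ker : ker φ ⊔ ker e ≤ ker (φ * e) := by
    refine sup_le (fun x hx => ?_) (ker_le_ker_comp e φ)
    rw [mem_ker, Module.End.mul_apply, (IsIdempotentElem.mem_range_iff he).mp (hess.1 hx)]
    exact hx
  have hφe : φ * e = 0 :=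
    hK _ _ (hess.sup_essentialIn_top_of_isCompl (IsIdempotentElem.isCompl he)) hφe_ker
  exact ⟨e, he, le_antisymm hess.1 (range_le_ker_iff.mpr hφe)⟩

end Rickart

/-- `M` is a K-nonsingular CS-Rickart module iff `M` is a Rickart module. -/
theorem kNonsingular_csRickart_iff_rickart
    {R : Type*} [Ring R] {M : Type*} [AddCommGroup M] [Module R M] :
    (IsKNonsingular R M ∧ IsCSRickart R M) ↔ IsRickart R M :=
  ⟨fun ⟨hK, hCS⟩ => hCS.isRickart hK, fun hM => ⟨hM.isKNonsingular, hM.isCSRickart⟩⟩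

end CSRickartPaper
end

section
/- For a right R-module M, the following are equivalent: (1) M is a T-noncosingular d-CS-Rickart module; (2) M is a d-Rickart module. -/
namespace CSRickartPaper

/-! If `im φ` lies above `D` with `M = D ⊕ K`, then `im φ ⊓ K` is the image of `π_K ∘ φ`, where
`π_K` is the projection onto `K` along `D`, and it is small in `K`, hence in `M`.
T-noncosingularity kills `π_K ∘ φ`, so `im φ ≤ D`, i.e. `im φ = D`. Conversely, a summand `eM`
lies above itself, and a direct summand that is small in `M` is zero. -/

section

variable {R : Type*} [Ring R] {M : Type*} [AddCommGroup M] [Module R M]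

theorem SmallIn.mono {N K L : Submodule R M} (h : SmallIn N K) (hKL : K ≤ L) : SmallIn N L := by
  refine ⟨h.1.trans hKL, fun X hXL hX => le_antisymm hXL ?_⟩
  have hKX : K ≤ X := by
    have : N ⊔ X ⊓ K = K := by rw [← sup_inf_assoc_of_le X h.1, hX, inf_eq_right.mpr hKL]
    rw [← h.2 (X ⊓ K) inf_le_right this]
    exact inf_le_left
  exact hX ▸ sup_le (h.1.trans hKX) le_rfl

theorem smallIn_bot (P : Submodule R M) : SmallIn ⊥ P :=
  ⟨bot_le, fun _ _ h => by rwa [bot_sup_eq] at h⟩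

theorem SmallIn.eq_bot_of_isCompl {D K : Submodule R M} (h : SmallIn D ⊤) (hDK : IsCompl D K) :
    D = ⊥ := by
  have hK : K = ⊤ := h.2 K le_top hDK.sup_eq_top
  simpa [hK] using hDK.inf_eq_bot

theorem liesAbove_self_of_isCompl {D K : Submodule R M} (h : IsCompl D K) : LiesAbove D D :=
  ⟨K, h, le_rfl, h.inf_eq_bot ▸ smallIn_bot K⟩

theorem map_projection_eq_inf {N D K : Submodule R M} (h : IsCompl D K) (hDN : D ≤ N) :
    N.map (K.projection D h.symm) = N ⊓ K := by
  apply le_antisymm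
  · rintro _ ⟨x, hx, rfl⟩
    refine ⟨?_, Submodule.projection_apply_mem _ x⟩
    rw [SetLike.mem_coe, Submodule.projection_eq_self_sub_projection h]
    exact N.sub_mem hx (hDN (Submodule.projection_apply_mem _ x))
  · intro x hx
    exact ⟨x, hx.1, Submodule.projection_apply_of_mem_left _ hx.2⟩

theorem IsTNoncosingular.eq_zero_of_smallIn (hT : IsTNoncosingular R M) {φ : Module.End R M}
    (h : SmallIn (LinearMap.range φ) ⊤) : φ = 0 :=
  of_not_not fun hφ => hT φ hφ h

theorem IsTNoncosingular.range_eq_of_liesAbove (hT : IsTNoncosingular R M)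
    {φ : Module.End R M} {D : Submodule R M} (h : LiesAbove (LinearMap.range φ) D) :
    LinearMap.range φ = D := by
  obtain ⟨K, hDK, hDN, hsmall⟩ := h
  have hrange : LinearMap.range (K.projection D hDK.symm ∘ₗ φ) = LinearMap.range φ ⊓ K := by
    rw [LinearMap.range_comp, map_projection_eq_inf hDK hDN]
  have hzero := hT.eq_zero_of_smallIn (hrange ▸ hsmall.mono le_top)
  refine le_antisymm ?_ hDN
  simpa using LinearMap.range_le_ker_iff.mpr hzero

theorem IsDRickart.isTNoncosingular (h : IsDRickart R M) : IsTNoncosingular R M := by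
  intro φ hφ hsmall
  obtain ⟨e, he, hφe⟩ := h φ
  have hbot := (hφe ▸ hsmall).eq_bot_of_isCompl (LinearMap.IsIdempotentElem.isCompl he)
  exact hφ (LinearMap.range_eq_bot.mp (hφe.trans hbot))

theorem IsDRickart.isDCSRickart (h : IsDRickart R M) : IsDCSRickart R M := by
  intro φ
  obtain ⟨e, he, hφe⟩ := h φ
  exact ⟨_, hφe ▸ liesAbove_self_of_isCompl (LinearMap.IsIdempotentElem.isCompl he)⟩

theorem IsDCSRickart.isDRickart (hT : IsTNoncosingular R M) (h : IsDCSRickart R M) :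
    IsDRickart R M := by
  intro φ
  obtain ⟨D, hD⟩ := h φ
  have hφD := hT.range_eq_of_liesAbove hD
  obtain ⟨K, hDK, -⟩ := hD
  exact ⟨D.projection K hDK, Submodule.isIdempotentElem_projection hDK, by
    rw [Submodule.range_projection, hφD]⟩

end

/-- `M` is a T-noncosingular d-CS-Rickart module iff `M` is a dual Rickart module. -/
theorem tNoncosingular_dcsRickart_iff_dRickart
    {R : Type*} [Ring R] {M : Type*} [AddCommGroup M] [Module R M] :
    (IsTNoncosingular R M ∧ IsDCSRickart R M) ↔ IsDRickart R M :=
  ⟨fun ⟨hT, h⟩ => h.isDRickart hT, fun h => ⟨h.isTNoncosingular, h.isDCSRickart⟩⟩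

end CSRickartPaper
end

section
/- Let M = M₁ ⊕ … ⊕ Mₙ be a right R-module satisfying the C₂ condition. If M_i is relatively CS-Rickart to M_j for all i, j ∈ {1,…,n}, then M is a CS-Rickart module. -/
/-!
Each `Mᵢ` is relatively CS-Rickart to `M` itself: a kernel of a map into the finite product
`M ≅ ∏ Mⱼ` is a finite intersection of kernels of maps into the `Mⱼ`, and intersecting with one
more kernel is handled by applying the hypothesis to that map composed with the projection onto
the summand already found.

Fix `φ ∈ End M`. Adding the `Mᵢ` one at a time we find a direct summand `S` of `M` with
`ker φ ∩ S = 0` and `ker φ ⊕ S` essential in `M`. In the step, `Mᵢ = A₀ ⊕ A₁` with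
`ker φ ∩ Mᵢ` essential in `A₀`, so `φ` is injective on `A₁`; by C₂ the image `φ(A₁)` is a
summand, and projecting away from it gives an endomorphism with kernel `ker φ ⊕ A₁`, to which
the induction hypothesis applies.

Finally, with `M = S ⊕ T`, C₂ gives a left inverse `ρ` of `φ` on `S`, and the shear
`1 - ρ φ p_T` is an automorphism carrying `(ker φ ⊕ S) ∩ T`, which is essential in `T`, onto
`ker φ`. Hence `ker φ` is essential in the image of `T`, which is again a complement of `S`.
-/

namespace CSRickartPaper

section Lattice

variable {α : Type*} [Lattice α] [BoundedOrder α] [IsModularLattice α] {a b c x : α}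

theorem isCompl_sup_inf_of_le (ha : IsCompl a x) (hb : IsCompl b c) (hbx : b ≤ x) :
    IsCompl (a ⊔ b) (c ⊓ x) := by
  have hx : b ⊔ c ⊓ x = x := by rw [← sup_inf_assoc_of_le c hbx, hb.sup_eq_top, top_inf_eq]
  refine ⟨(hb.disjoint.mono_right inf_le_left).disjoint_sup_left_of_disjoint_sup_right ?_, ?_⟩
  · rw [hx]; exact ha.disjoint
  · rw [codisjoint_iff, sup_assoc, hx, ha.sup_eq_top]

theorem Disjoint.isCompl_sup_right_of_isCompl_sup_left (hab : Disjoint a b)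
    (h : IsCompl (a ⊔ b) c) : IsCompl a (b ⊔ c) :=
  ⟨hab.disjoint_sup_right_of_disjoint_sup_left h.disjoint,
    codisjoint_iff.mpr (by rw [← sup_assoc, h.sup_eq_top])⟩

end Lattice

namespace EssentialIn

variable {R : Type*} [Ring R] {M : Type*} [AddCommGroup M] [Module R M]
  {N N' P Q : Submodule R M}

theorem refl (N : Submodule R M) : EssentialIn N N :=
  ⟨le_rfl, fun _ hK h => by rwa [inf_eq_right.mpr hK] at h⟩

theorem trans (hNP : EssentialIn N P) (hPQ : EssentialIn P Q) : EssentialIn N Q := by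
  refine ⟨hNP.1.trans hPQ.1, fun K hK hNK => hPQ.2 K hK (hNP.2 _ inf_le_left ?_)⟩
  rwa [← inf_assoc, inf_eq_left.mpr hNP.1]

theorem mono_s15 (h : EssentialIn N P) (hNN' : N ≤ N') (hN'P : N' ≤ P) : EssentialIn N' P :=
  ⟨hN'P, fun K hK hK' => h.2 K hK (eq_bot_mono (inf_le_inf_right K hNN') hK')⟩

theorem inf_of_le (h : EssentialIn N P) (hQP : Q ≤ P) : EssentialIn (N ⊓ Q) Q :=
  ⟨inf_le_right, fun K hK hNK =>
    h.2 K (hK.trans hQP) (by rwa [inf_assoc, inf_eq_right.mpr hK] at hNK)⟩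

theorem sup_right (h : EssentialIn N P) (hPQ : Disjoint P Q) : EssentialIn (N ⊔ Q) (P ⊔ Q) := by
  refine ⟨sup_le_sup_right h.1 Q, fun K hK hNK => ?_⟩
  have hKQ : (Q ⊔ K) ⊓ (N ⊔ Q) = Q := by
    rw [sup_inf_assoc_of_le K le_sup_right, inf_comm, hNK, sup_bot_eq]
  have hP : (Q ⊔ K) ⊓ P = ⊥ := by
    refine h.2 _ inf_le_right (eq_bot_iff.mpr ?_)
    calc N ⊓ ((Q ⊔ K) ⊓ P) ≤ (Q ⊔ K) ⊓ (N ⊔ Q) ⊓ P :=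
          le_inf (le_inf (inf_le_right.trans inf_le_left) (inf_le_left.trans le_sup_left))
            (inf_le_left.trans h.1)
      _ = ⊥ := by rw [hKQ, hPQ.symm.eq_bot]
  have hKle : K ≤ Q := by
    calc K ≤ (Q ⊔ P) ⊓ (Q ⊔ K) := le_inf (hK.trans (sup_comm P Q).le) le_sup_right
      _ = Q := by rw [sup_inf_assoc_of_le P le_sup_left, inf_comm, hP, sup_bot_eq]
  exact eq_bot_iff.mpr (hNK ▸ le_inf (hKle.trans le_sup_right) le_rfl)

theorem sup {N₁ P₁ N₂ P₂ : Submodule R M} (h₁ : EssentialIn N₁ P₁) (h₂ : EssentialIn N₂ P₂)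
    (hP : Disjoint P₁ P₂) : EssentialIn (N₁ ⊔ N₂) (P₁ ⊔ P₂) := by
  have h₂' : EssentialIn (N₂ ⊔ N₁) (P₂ ⊔ N₁) := h₂.sup_right (hP.symm.mono_right h₁.1)
  rw [sup_comm N₂, sup_comm P₂] at h₂'
  exact h₂'.trans (h₁.sup_right hP)

theorem map {M' : Type*} [AddCommGroup M'] [Module R M'] (h : EssentialIn N P)
    {f : M →ₗ[R] M'} (hf : Function.Injective f) : EssentialIn (N.map f) (P.map f) := by
  refine ⟨Submodule.map_mono h.1, fun K hK hNK => ?_⟩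
  have hK' : (K.comap f).map f = K :=
    Submodule.map_comap_eq_self (hK.trans (LinearMap.map_le_range))
  rw [← hK', h.2 (K.comap f) ?_ ?_, Submodule.map_bot]
  · rwa [← Submodule.map_le_map_iff_of_injective hf, hK']
  · apply Submodule.map_injective_of_injective hf
    rw [Submodule.map_inf _ hf, hK', hNK, Submodule.map_bot]

end EssentialIn

section Summand

variable {R : Type*} [Ring R] {M : Type*} [AddCommGroup M] [Module R M]

def IsEssentialInSummand (N : Submodule R M) : Prop :=
  ∃ D : Submodule R M, IsDirectSummand D ∧ EssentialIn N D

theorem exists_isIdempotentElem_essentialIn_iff {N : Submodule R M} :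
    (∃ e : Module.End R M, IsIdempotentElem e ∧ EssentialIn N (LinearMap.range e)) ↔
      IsEssentialInSummand N := by
  constructor
  · rintro ⟨e, he, hN⟩
    exact ⟨_, ⟨_, LinearMap.IsIdempotentElem.isCompl he⟩, hN⟩
  · rintro ⟨D, ⟨D', hD⟩, hN⟩
    exact ⟨D.projection D' hD, Submodule.isIdempotentElem_projection hD,
      (Submodule.range_projection hD).symm ▸ hN⟩

theorem isCSRickart_iff : IsCSRickart R M ↔ ∀ φ : Module.End R M,
    IsEssentialInSummand (LinearMap.ker φ) :=
  forall_congr' fun _ => exists_isIdempotentElem_essentialIn_iff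

theorem isRelCSRickart_iff {N : Type*} [AddCommGroup N] [Module R N] :
    IsRelCSRickart R M N ↔ ∀ f : M →ₗ[R] N, IsEssentialInSummand (LinearMap.ker f) :=
  forall_congr' fun _ => exists_isIdempotentElem_essentialIn_iff

end Summand

section RelativeCSRickart

variable {R : Type*} [Ring R] {A : Type*} [AddCommGroup A] [Module R A]

theorem IsEssentialInSummand.inf_ker {C : Type*} [AddCommGroup C] [Module R C]
    {N : Submodule R A} (hN : IsEssentialInSummand N) (hrel : IsRelCSRickart R A C)
    (g : A →ₗ[R] C) : IsEssentialInSummand (N ⊓ LinearMap.ker g) := by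
  obtain ⟨D, ⟨D', hD⟩, hND⟩ := hN
  set p := D.projection D' hD
  obtain ⟨E, ⟨E', hE⟩, hkerE⟩ := isRelCSRickart_iff.mp hrel (g ∘ₗ p)
  have hker : LinearMap.ker (g ∘ₗ p) ⊓ D = LinearMap.ker g ⊓ D := by
    ext x
    simp +contextual only [Submodule.mem_inf, LinearMap.mem_ker, LinearMap.comp_apply, p,
      Submodule.projection_apply_of_mem_left, and_congr_left_iff, implies_true]
  have hD'E : D' ≤ E := fun x hx => hkerE.1 <| by
    simp [p, (Submodule.projection_apply_eq_zero_iff hD).mpr hx]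
  refine ⟨E ⊓ D, ⟨E' ⊔ D', ?_⟩, ?_⟩
  · simpa only [sup_comm, inf_comm] using (isCompl_sup_inf_of_le hE.symm hD.symm hD'E).symm
  · have h₁ := hND.inf_of_le (inf_le_right : LinearMap.ker g ⊓ D ≤ D)
    rw [inf_left_comm, inf_eq_left.mpr hND.1, inf_comm] at h₁
    have h₂ : EssentialIn (LinearMap.ker g ⊓ D) (E ⊓ D) := by
      simpa only [← inf_assoc, inf_eq_left.mpr hkerE.1, hker]
        using hkerE.inf_of_le (inf_le_left : E ⊓ D ≤ E)
    exact h₁.trans h₂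

theorem isEssentialInSummand_biInf_ker {ι : Type*} {C : ι → Type*} [∀ j, AddCommGroup (C j)]
    [∀ j, Module R (C j)] (hrel : ∀ j, IsRelCSRickart R A (C j)) (g : ∀ j, A →ₗ[R] C j)
    (s : Finset ι) : IsEssentialInSummand (⨅ j ∈ s, LinearMap.ker (g j)) := by
  classical
  induction s using Finset.induction_on with
  | empty => simpa using ⟨⊤, ⟨⊥, isCompl_top_bot⟩, EssentialIn.refl ⊤⟩
  | insert j s _ ih =>
    rw [Finset.iInf_insert, inf_comm]
    exact ih.inf_ker (hrel j) (g j)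

theorem IsRelCSRickart.pi {ι : Type*} [Fintype ι] {C : ι → Type*} [∀ j, AddCommGroup (C j)]
    [∀ j, Module R (C j)] (hrel : ∀ j, IsRelCSRickart R A (C j)) :
    IsRelCSRickart R A (∀ j, C j) := by
  refine isRelCSRickart_iff.mpr fun f => ?_
  have hker : LinearMap.ker f = ⨅ j ∈ Finset.univ, LinearMap.ker (LinearMap.proj j ∘ₗ f) := by
    ext x
    simp [funext_iff]
  rw [hker]
  exact isEssentialInSummand_biInf_ker hrel _ _

theorem IsRelCSRickart.of_injective {B B' : Type*} [AddCommGroup B] [Module R B]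
    [AddCommGroup B'] [Module R B'] (hrel : IsRelCSRickart R A B) {h : B' →ₗ[R] B}
    (hh : Function.Injective h) : IsRelCSRickart R A B' := fun f => by
  simpa only [LinearMap.ker_comp_of_ker_eq_bot f (LinearMap.ker_eq_bot.mpr hh)] using hrel (h ∘ₗ f)

theorem IsRelCSRickart.of_isInternal {M : Type*} [AddCommGroup M] [Module R M] {ι : Type*}
    [Fintype ι] [DecidableEq ι] {𝕄 : ι → Submodule R M} (hdec : DirectSum.IsInternal 𝕄)
    (hrel : ∀ j, IsRelCSRickart R A (𝕄 j)) : IsRelCSRickart R A M :=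
  (IsRelCSRickart.pi hrel).of_injective
    ((LinearEquiv.ofBijective (DirectSum.coeLinearMap 𝕄) hdec).symm.trans
      (DirectSum.linearEquivFunOnFintype R ι fun j => 𝕄 j)).injective

theorem IsRelCSRickart.exists_essentialIn_ker_inf {M : Type*} [AddCommGroup M] [Module R M]
    {Q : Submodule R M} {N : Type*} [AddCommGroup N] [Module R N] (hrel : IsRelCSRickart R Q N)
    (φ : M →ₗ[R] N) :
    ∃ A₀ A₁ : Submodule R M, Disjoint A₀ A₁ ∧ A₀ ⊔ A₁ = Q ∧
      EssentialIn (LinearMap.ker φ ⊓ Q) A₀ := by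
  obtain ⟨D, ⟨D', hD⟩, hess⟩ := isRelCSRickart_iff.mp hrel (φ ∘ₗ Q.subtype)
  refine ⟨D.map Q.subtype, D'.map Q.subtype, Submodule.disjoint_map Q.injective_subtype hD.disjoint,
    by rw [← Submodule.map_sup, hD.sup_eq_top, Submodule.map_subtype_top], ?_⟩
  simpa [LinearMap.ker_comp, Submodule.map_comap_subtype, inf_comm]
    using hess.map Q.injective_subtype

end RelativeCSRickart

section C2

variable {R : Type*} [Ring R] {M : Type*} [AddCommGroup M] [Module R M]

theorem IsC2.exists_leftInverse (hC2 : IsC2 R M) {φ : Module.End R M} {A : Submodule R M}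
    (hA : IsDirectSummand A) (hdisj : Disjoint (LinearMap.ker φ) A) :
    ∃ ρ : M →ₗ[R] A, ∀ a : A, ρ (φ a) = a := by
  have hi : Function.Injective (φ ∘ₗ A.subtype) := by
    rw [← LinearMap.ker_eq_bot, LinearMap.ker_comp, ← Submodule.disjoint_iff_comap_eq_bot]
    exact hdisj.symm
  obtain ⟨C, hC⟩ := hC2 _ A hA ⟨(LinearEquiv.ofInjective _ hi).symm⟩
  exact ⟨LinearMap.linearProjOfIsCompl C _ hi hC,
    LinearMap.linearProjOfIsCompl_apply_left C _ hi hC⟩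

theorem IsC2.exists_ker_eq_sup (hC2 : IsC2 R M) {φ : Module.End R M} {A : Submodule R M}
    (hA : IsDirectSummand A) (hdisj : Disjoint (LinearMap.ker φ) A) :
    ∃ ψ : Module.End R M, LinearMap.ker ψ = LinearMap.ker φ ⊔ A := by
  obtain ⟨ρ, hρ⟩ := hC2.exists_leftInverse hA hdisj
  refine ⟨φ - φ ∘ₗ A.subtype ∘ₗ ρ ∘ₗ φ, le_antisymm (fun x hx => ?_) (sup_le ?_ ?_)⟩
  · have hx' : x - ρ (φ x) ∈ LinearMap.ker φ := by
      simpa [sub_eq_zero] using hx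
    simpa using Submodule.add_mem_sup hx' (ρ (φ x)).2
  · intro x hx
    simp [LinearMap.mem_ker.mp hx]
  · intro x hx
    simp only [LinearMap.mem_ker, LinearMap.sub_apply, LinearMap.comp_apply,
      Submodule.subtype_apply]
    rw [show ρ (φ x) = ⟨x, hx⟩ from hρ ⟨x, hx⟩, sub_self]

theorem isCompl_map_id_sub {S T : Submodule R M} (hST : IsCompl S T) {ν : Module.End R M}
    (hν : LinearMap.range ν ≤ S) : IsCompl S (T.map (LinearMap.id - ν)) := by
  have hνS : ∀ x, ν x ∈ S := fun x => hν ⟨x, rfl⟩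
  refine ⟨Submodule.disjoint_def.mpr ?_, codisjoint_iff.mpr (eq_top_iff.mpr fun x _ => ?_)⟩
  · rintro _ hS ⟨t, ht, rfl⟩
    have htS : t ∈ S := by
      simpa using S.add_mem hS (hνS t)
    simp [Submodule.disjoint_def.mp hST.disjoint t htS ht]
  · obtain ⟨s, hs, t, ht, rfl⟩ := Submodule.mem_sup.mp (hST.sup_eq_top ▸ Submodule.mem_top (x := x))
    have : s + t = (s + ν t) + (LinearMap.id - ν : Module.End R M) t := by simp
    rw [this]
    exact Submodule.add_mem_sup (S.add_mem hs (hνS t)) ⟨t, ht, rfl⟩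

theorem IsC2.isEssentialInSummand_ker (hC2 : IsC2 R M) {φ : Module.End R M}
    {S : Submodule R M} (hS : IsDirectSummand S) (hdisj : Disjoint (LinearMap.ker φ) S)
    (hess : EssentialIn (LinearMap.ker φ ⊔ S) ⊤) : IsEssentialInSummand (LinearMap.ker φ) := by
  obtain ⟨ρ, hρ⟩ := hC2.exists_leftInverse hS hdisj
  obtain ⟨T, hST⟩ := hS
  set p := T.projection S hST.symm
  set ν : Module.End R M := S.subtype ∘ₗ ρ ∘ₗ φ ∘ₗ p
  set u : Module.End R M := LinearMap.id - ν
  have hνS : LinearMap.range ν ≤ S :=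
    (LinearMap.range_comp_le_range _ _).trans S.range_subtype.le
  have hν : ∀ x s, s ∈ S → φ (p x) = φ s → ν x = s := fun x s hs h => by
    simp only [ν, LinearMap.comp_apply, h]
    exact congrArg Subtype.val (hρ ⟨s, hs⟩)
  have hu : Function.Injective u := by
    refine LinearMap.ker_eq_bot.mp (eq_bot_iff.mpr fun x hx => ?_)
    have hx : x = ν x := sub_eq_zero.mp hx
    have hpx : p x = 0 := (Submodule.projection_apply_eq_zero_iff _).mpr (hx ▸ hνS ⟨x, rfl⟩)
    rw [Submodule.mem_bot, hx, hν x 0 S.zero_mem (by rw [hpx])]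
  have hker : ((LinearMap.ker φ ⊔ S) ⊓ T).map u = LinearMap.ker φ := by
    refine le_antisymm ?_ fun k hk => ?_
    · rintro _ ⟨t, ⟨hts, htT⟩, rfl⟩
      obtain ⟨k, hk, s, hs, rfl⟩ := Submodule.mem_sup.mp hts
      have hks : ν (k + s) = s := hν _ s hs <| by
        rw [Submodule.projection_apply_of_mem_left _ htT, map_add, LinearMap.mem_ker.mp hk,
          zero_add]
      simpa [u, hks] using hk
    · have hs : p k - k ∈ S := by
        simpa using S.neg_mem (Submodule.sub_projection_mem hST.symm k)
      have hpk : p k ∈ T := Submodule.projection_apply_mem _ k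
      have hνk : ν (p k) = p k - k := hν _ _ hs <| by
        rw [Submodule.projection_apply_of_mem_left _ hpk, map_sub, LinearMap.mem_ker.mp hk,
          sub_zero]
      refine ⟨p k, ⟨?_, hpk⟩, by simp [u, hνk]⟩
      simpa using Submodule.add_mem_sup hk hs
  exact ⟨T.map u, ⟨S, (isCompl_map_id_sub hST hνS).symm⟩, hker ▸ (hess.inf_of_le le_top).map hu⟩

def IsSummandComplementIn (S L N : Submodule R M) : Prop :=
  IsDirectSummand S ∧ S ≤ N ∧ Disjoint L S ∧ EssentialIn ((L ⊔ S) ⊓ N) N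

theorem IsC2.exists_isSummandComplementIn_sup (hC2 : IsC2 R M) {P Q Qc : Submodule R M}
    (hQ : IsCompl Q Qc) (hPQ : P ≤ Qc) (hrel : IsRelCSRickart R Q M)
    (hP : ∀ ψ : Module.End R M, ∃ S, IsSummandComplementIn S (LinearMap.ker ψ) P)
    (φ : Module.End R M) : ∃ S, IsSummandComplementIn S (LinearMap.ker φ) (P ⊔ Q) := by
  obtain ⟨A₀, A₁, hA, hAQ, hess₀⟩ := hrel.exists_essentialIn_ker_inf φ
  have hA₁Q : A₁ ≤ Q := hAQ ▸ le_sup_right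
  have hA₁ : IsCompl A₁ (A₀ ⊔ Qc) :=
    hA.symm.isCompl_sup_right_of_isCompl_sup_left (by rwa [sup_comm, hAQ])
  have hdisj₁ : Disjoint (LinearMap.ker φ) A₁ := by
    rw [disjoint_iff, eq_bot_iff, ← hA.eq_bot]
    exact le_inf ((le_inf inf_le_left (inf_le_right.trans hA₁Q)).trans hess₀.1) inf_le_right
  obtain ⟨ψ, hψ⟩ := hC2.exists_ker_eq_sup ⟨_, hA₁⟩ hdisj₁
  obtain ⟨S, ⟨C, hSC⟩, hSP, hdisj, hess⟩ := hP ψ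
  rw [hψ] at hdisj hess
  refine ⟨A₁ ⊔ S,
    ⟨C ⊓ (A₀ ⊔ Qc), isCompl_sup_inf_of_le hA₁ hSC (hSP.trans (hPQ.trans le_sup_right))⟩,
    sup_le (hA₁Q.trans le_sup_right) (hSP.trans le_sup_left),
    hdisj₁.disjoint_sup_right_of_disjoint_sup_left hdisj, ?_⟩
  have hessQ : EssentialIn (LinearMap.ker φ ⊓ Q ⊔ A₁) Q := by
    simpa only [hAQ] using hess₀.sup_right hA
  refine (hess.sup hessQ (hQ.symm.disjoint.mono_left hPQ)).mono_s15 ?_ inf_le_right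
  rw [← sup_assoc (LinearMap.ker φ)]
  exact sup_le (inf_le_inf_left _ le_sup_left)
    (le_inf (sup_le (inf_le_left.trans (le_sup_left.trans le_sup_left))
      (le_sup_right.trans le_sup_left)) ((sup_le inf_le_right hA₁Q).trans le_sup_right))

theorem exists_isSummandComplementIn_biSup (hC2 : IsC2 R M) {ι : Type*}
    {𝕄 : ι → Submodule R M} (hind : iSupIndep 𝕄) (htop : iSup 𝕄 = ⊤)
    (hrel : ∀ i, IsRelCSRickart R (𝕄 i) M) (s : Finset ι)
    (φ : Module.End R M) : ∃ S, IsSummandComplementIn S (LinearMap.ker φ) (⨆ i ∈ s, 𝕄 i) := by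
  classical
  induction s using Finset.induction_on generalizing φ with
  | empty =>
    refine ⟨⊥, ⟨⊤, isCompl_bot_top⟩, bot_le, disjoint_bot_right, ?_⟩
    simpa using EssentialIn.refl (⊥ : Submodule R M)
  | insert i s hi ih =>
    have hcompl : IsCompl (𝕄 i) (⨆ j ≠ i, 𝕄 j) :=
      ⟨hind i, codisjoint_iff.mpr (by rw [← iSup_split_single, htop])⟩
    rw [Finset.iSup_insert, sup_comm]
    exact hC2.exists_isSummandComplementIn_sup hcompl
      (biSup_mono fun j hj => ne_of_mem_of_not_mem hj hi) (hrel i) ih φ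

end C2

/-- If `M = M₁ ⊕ … ⊕ Mₙ` satisfies C₂ and each `Mᵢ` is relatively CS-Rickart to
each `Mⱼ`, then `M` is CS-Rickart. -/
theorem c2_relCSRickart_directSum
    {R : Type*} [Ring R] {M : Type*} [AddCommGroup M] [Module R M]
    {n : ℕ} (𝕄 : Fin n → Submodule R M) (hdec : DirectSum.IsInternal 𝕄)
    (hC2 : IsC2 R M)
    (hrel : ∀ i j, IsRelCSRickart R (𝕄 i) (𝕄 j)) :
    IsCSRickart R M := by
  refine isCSRickart_iff.mpr fun φ => ?_
  obtain ⟨S, hS, -, hdisj, hess⟩ := exists_isSummandComplementIn_biSup hC2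
    hdec.submodule_iSupIndep hdec.submodule_iSup_eq_top
    (fun i => IsRelCSRickart.of_isInternal hdec (hrel i)) Finset.univ φ
  simp only [Finset.mem_univ, iSup_pos, hdec.submodule_iSup_eq_top, inf_top_eq] at hess
  exact hC2.isEssentialInSummand_ker hS hdisj hess

end CSRickartPaper
end

section
/- Let M = M₁ ⊕ … ⊕ Mₙ be a right R-module of finite length. If Hom_R(Soc(M_i), Soc(M_j)) = 0 for each pair of distinct indices i, j ∈ {1,…,n}, and each M_i is an indecomposable CS-Rickart module, then M is a CS-Rickart module. -/
namespace CSRickartPaper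

/-- The socle of a submodule `N` of `M`: the sum of all simple submodules
contained in `N`. -/
def socIn {R : Type*} [Ring R] {M : Type*} [AddCommGroup M] [Module R M]
    (N : Submodule R M) : Submodule R M :=
  sSup {S : Submodule R M | S ≤ N ∧ IsSimpleModule R S}

/-- A module is indecomposable if it is nonzero and admits no nontrivial direct
sum decomposition. -/
def IsIndecomposableModule (R : Type*) [Ring R] (M : Type*) [AddCommGroup M]
    [Module R M] : Prop :=
  Nontrivial M ∧ ∀ A B : Submodule R M, IsCompl A B → A = ⊥ ∨ B = ⊥

/-!
Write `φ` as a block matrix along `M = ⊕ Mᵢ`, with projections `πᵢ`. Orthogonality of the socles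
kills the off-diagonal blocks on `Soc(M) = ⊕ Soc(Mᵢ)`, so there `φ` acts through the diagonal
compressions `πⱼ φ|_{Mⱼ}`. As `Mⱼ` is indecomposable and CS-Rickart, each compression is either
injective or vanishes on `Soc(Mⱼ)`. Let `T` be the set of injective ones, `N = ⊕_{j ∈ T} Mⱼ` and
`f = π_N φ`. Then `N ∩ ker f` has zero socle, hence is zero, so `f` restricts to an injective, and
by Artinianity bijective, endomorphism of `N`, giving `M = N ⊕ ker f`. Finally `ker φ ≤ ker f`
contains the socle of `ker f`, hence is essential in it.
-/

open LinearMap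

section Socle

variable {R : Type*} [Ring R] {M M' : Type*} [AddCommGroup M] [Module R M]
  [AddCommGroup M'] [Module R M']

theorem socIn_le (P : Submodule R M) : socIn P ≤ P :=
  sSup_le fun _ hS => hS.1

theorem socIn_mono {P Q : Submodule R M} (h : P ≤ Q) : socIn P ≤ socIn Q :=
  sSup_le_sSup fun _ hS => ⟨hS.1.trans h, hS.2⟩

theorem map_le_socIn_of_isSimpleModule (f : M →ₗ[R] M') {S : Submodule R M}
    [IsSimpleModule R S] {Q : Submodule R M'} (h : S.map f ≤ Q) : S.map f ≤ socIn Q := by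
  have hrange : range (f ∘ₗ S.subtype) = S.map f := by
    rw [range_comp, Submodule.range_subtype]
  rcases eq_bot_or_eq_top (ker (f ∘ₗ S.subtype)) with hker | hker
  · have : IsSimpleModule R (S.map f) := by
      rw [← hrange]
      exact .congr (LinearEquiv.ofInjective _ (ker_eq_bot.mp hker)).symm
    exact le_sSup (show S.map f ∈ _ from ⟨h, this⟩)
  · rw [← hrange, ker_eq_top.mp hker, range_zero]
    exact bot_le

theorem map_socIn_le (f : M →ₗ[R] M') {P : Submodule R M} {Q : Submodule R M'}
    (h : P.map f ≤ Q) : (socIn P).map f ≤ socIn Q := by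
  rw [socIn, sSup_eq_iSup', Submodule.map_iSup]
  exact iSup_le fun ⟨_, hSP, _⟩ => map_le_socIn_of_isSimpleModule f ((Submodule.map_mono hSP).trans h)

theorem socIn_le_of_essentialIn {K P : Submodule R M} (h : EssentialIn K P) : socIn P ≤ K := by
  refine sSup_le fun S ⟨hSP, hS⟩ => ?_
  have hatom := isSimpleModule_iff_isAtom.mp hS
  rcases hatom.le_iff.mp (inf_le_right : K ⊓ S ≤ S) with hKS | hKS
  · exact absurd (h.2 S hSP hKS) hatom.1
  · exact hKS ▸ inf_le_left

theorem essentialIn_of_socIn_le [IsAtomic (Submodule R M)] {K P : Submodule R M}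
    (hKP : K ≤ P) (hsoc : socIn P ≤ K) : EssentialIn K P := by
  refine ⟨hKP, fun L hLP hKL => ?_⟩
  rcases eq_bot_or_exists_atom_le L with hL | ⟨S, hS, hSL⟩
  · exact hL
  · have hSP : S ≤ socIn P := le_sSup ⟨hSL.trans hLP, isSimpleModule_iff_isAtom.mpr hS⟩
    exact absurd (eq_bot_iff.mpr (hKL ▸ le_inf (hSP.trans hsoc) hSL)) hS.1

theorem eq_bot_of_socIn_eq_bot [IsAtomic (Submodule R M)] {P : Submodule R M}
    (h : socIn P = ⊥) : P = ⊥ :=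
  (essentialIn_of_socIn_le bot_le h.le).2 P le_rfl (bot_inf_eq P)

theorem essentialIn_map_subtype {P : Submodule R M} {K : Submodule R P}
    (h : EssentialIn K ⊤) : EssentialIn (K.map P.subtype) P := by
  refine ⟨Submodule.map_subtype_le P K, fun L hLP hKL => ?_⟩
  have hcomap : K ⊓ L.comap P.subtype = ⊥ := by
    rw [← Submodule.comap_map_eq_of_injective P.injective_subtype K, ← Submodule.comap_inf,
      hKL, Submodule.comap_bot, Submodule.ker_subtype]
  rw [← inf_eq_right.mpr hLP, ← Submodule.map_comap_subtype, h.2 _ le_top hcomap,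
    Submodule.map_bot]

def SocOrthogonal {ι : Type*} (𝕄 : ι → Submodule R M) : Prop :=
  ∀ i j, i ≠ j → ∀ f : socIn (𝕄 i) →ₗ[R] socIn (𝕄 j), f = 0

end Socle

section CSRickart

variable {R : Type*} [Ring R] {M : Type*} [AddCommGroup M] [Module R M]

theorem isCSRickart_of_exists_isCompl
    (h : ∀ φ : Module.End R M, ∃ N K : Submodule R M, IsCompl N K ∧ EssentialIn (ker φ) K) :
    IsCSRickart R M := fun φ => by
  obtain ⟨N, K, hNK, hess⟩ := h φ
  exact ⟨K.projection N hNK.symm, Submodule.isIdempotentElem_projection _,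
    by rwa [Submodule.range_projection]⟩

theorem IsIndecomposableModule.ker_eq_bot_or_essentialIn_top
    (hind : IsIndecomposableModule R M) (hcs : IsCSRickart R M) (g : Module.End R M) :
    ker g = ⊥ ∨ EssentialIn (ker g) ⊤ := by
  obtain ⟨e, he, hess⟩ := hcs g
  have hcompl := IsIdempotentElem.isCompl he
  rcases hind.2 _ _ hcompl with h | h
  · exact .inl (eq_bot_iff.mpr (h ▸ hess.1))
  · exact .inr (eq_top_of_isCompl_bot (h ▸ hcompl) ▸ hess)

theorem injOn_or_socIn_le_ker {X : Submodule R M} (hind : IsIndecomposableModule R X)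
    (hcs : IsCSRickart R X) (g : Module.End R M) (hg : ∀ x ∈ X, g x ∈ X) :
    (∀ x ∈ X, g x = 0 → x = 0) ∨ socIn X ≤ ker g := by
  rcases hind.ker_eq_bot_or_essentialIn_top hcs (g.restrict hg) with hker | hess
  · refine .inl fun x hx hgx => congrArg Subtype.val (?_ : (⟨x, hx⟩ : X) = 0)
    rw [← Submodule.mem_bot R, ← hker, mem_ker]
    exact Subtype.ext hgx
  · refine .inr ((socIn_le_of_essentialIn (essentialIn_map_subtype hess)).trans ?_)
    rw [ker_restrict, Submodule.map_comap_subtype]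
    exact inf_le_right

theorem isCompl_ker_of_range_le_of_disjoint [IsArtinian R M] {f : Module.End R M}
    {N : Submodule R M} (hf : range f ≤ N) (hd : Disjoint N (ker f)) : IsCompl N (ker f) := by
  have hfN : ∀ x, f x ∈ N := fun x => hf (mem_range_self f x)
  have hinj : Function.Injective (f.restrict fun x (_ : x ∈ N) => hfN x) := by
    rw [← ker_eq_bot, ker_restrict, ← Submodule.disjoint_iff_comap_eq_bot]
    exact hd
  refine ⟨hd, codisjoint_iff.mpr (eq_top_iff.mpr fun x _ => ?_)⟩
  obtain ⟨y, hy⟩ := IsArtinian.surjective_of_injective_endomorphism _ hinj ⟨f x, hfN x⟩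
  have hxy : x - y ∈ ker f := by
    rw [mem_ker, map_sub, sub_eq_zero]
    exact (congrArg Subtype.val hy).symm
  exact Submodule.mem_sup.mpr ⟨y, y.2, x - y, hxy, add_sub_cancel _ _⟩

end CSRickart

section Projections

variable {R : Type*} [Ring R] {M : Type*} [AddCommGroup M] [Module R M]
  {ι : Type*} [DecidableEq ι] {𝕄 : ι → Submodule R M} (hdec : DirectSum.IsInternal 𝕄)

noncomputable def proj (i : ι) : Module.End R M :=
  (𝕄 i).subtype ∘ₗ DirectSum.component R ι (fun i => 𝕄 i) i ∘ₗ
    (LinearEquiv.ofBijective (DirectSum.coeLinearMap 𝕄) hdec).symm.toLinearMap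

theorem proj_apply_mem (i : ι) (x : M) : proj hdec i x ∈ 𝕄 i :=
  Subtype.prop _

theorem proj_apply_of_mem {i : ι} {x : M} (hx : x ∈ 𝕄 i) : proj hdec i x = x :=
  congrArg Subtype.val (hdec.ofBijective_coeLinearMap_of_mem hx)

theorem proj_apply_of_mem_of_ne {i j : ι} {x : M} (hx : x ∈ 𝕄 i) (hij : i ≠ j) :
    proj hdec j x = 0 :=
  congrArg Subtype.val (hdec.ofBijective_coeLinearMap_of_mem_ne hij hx)

theorem proj_proj_apply (j k : ι) (x : M) :
    proj hdec j (proj hdec k x) = if j = k then proj hdec k x else 0 := by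
  split_ifs with hjk
  · exact proj_apply_of_mem hdec (hjk ▸ proj_apply_mem hdec k x)
  · exact proj_apply_of_mem_of_ne hdec (proj_apply_mem hdec k x) (Ne.symm hjk)

theorem proj_sum_proj_apply (j : ι) (T : Finset ι) (x : M) :
    proj hdec j ((∑ k ∈ T, proj hdec k) x) = if j ∈ T then proj hdec j x else 0 := by
  rw [LinearMap.sum_apply, map_sum]
  simp_rw [proj_proj_apply]
  exact Finset.sum_ite_eq T j _

theorem proj_sum_proj_apply_of_mem {j : ι} {T : Finset ι} (hj : j ∈ T) (x : M) :
    proj hdec j ((∑ k ∈ T, proj hdec k) x) = proj hdec j x := by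
  rw [proj_sum_proj_apply, if_pos hj]

theorem proj_sum_proj_apply_of_notMem {j : ι} {T : Finset ι} (hj : j ∉ T) (x : M) :
    proj hdec j ((∑ k ∈ T, proj hdec k) x) = 0 := by
  rw [proj_sum_proj_apply, if_neg hj]

variable [Fintype ι]

theorem sum_proj_apply (x : M) : ∑ i, proj hdec i x = x := by
  let e := LinearEquiv.ofBijective (DirectSum.coeLinearMap 𝕄) hdec
  conv_rhs => rw [← e.apply_symm_apply x, ← DirectSum.sum_univ_of (e.symm x)]
  rw [map_sum]
  exact Finset.sum_congr rfl fun i _ => (DirectSum.coeLinearMap_of 𝕄 i _).symm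

theorem eq_zero_of_forall_proj_apply_eq_zero {x : M} (h : ∀ i, proj hdec i x = 0) : x = 0 := by
  rw [← sum_proj_apply hdec x]
  exact Finset.sum_eq_zero fun i _ => h i

end Projections

section Decomposition

variable {R : Type*} [Ring R] {M : Type*} [AddCommGroup M] [Module R M]
  {ι : Type*} [DecidableEq ι] {𝕄 : ι → Submodule R M} (hdec : DirectSum.IsInternal 𝕄)

theorem proj_apply_mem_socIn {s : M} (hs : s ∈ socIn (⊤ : Submodule R M)) (i : ι) :
    proj hdec i s ∈ socIn (𝕄 i) :=
  map_socIn_le (proj hdec i) (Submodule.map_le_iff_le_comap.mpr fun x _ => proj_apply_mem hdec i x)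
    (Submodule.mem_map_of_mem hs)

theorem proj_map_eq_zero_of_mem_socIn
    (hsoc : SocOrthogonal 𝕄) (φ : Module.End R M)
    {i j : ι} (hij : i ≠ j) {s : M} (hs : s ∈ socIn (𝕄 i)) : proj hdec j (φ s) = 0 := by
  have hmaps : ∀ x ∈ socIn (𝕄 i), (proj hdec j ∘ₗ φ) x ∈ socIn (𝕄 j) := fun x hx =>
    map_socIn_le (proj hdec j ∘ₗ φ)
      (Submodule.map_le_iff_le_comap.mpr fun y _ => proj_apply_mem hdec j (φ y))
      (Submodule.mem_map_of_mem hx)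
  exact congrArg Subtype.val
    (LinearMap.congr_fun (hsoc i j hij ((proj hdec j ∘ₗ φ).restrict hmaps)) ⟨s, hs⟩)

variable [Fintype ι]

theorem proj_map_eq_proj_map_proj_of_mem_socIn
    (hsoc : SocOrthogonal 𝕄) (φ : Module.End R M)
    {s : M} (hs : s ∈ socIn (⊤ : Submodule R M)) (j : ι) :
    proj hdec j (φ s) = proj hdec j (φ (proj hdec j s)) := by
  conv_lhs => rw [← sum_proj_apply hdec s]
  rw [map_sum, map_sum, Finset.sum_eq_single j]
  · exact fun i _ hij =>
      proj_map_eq_zero_of_mem_socIn hdec hsoc φ hij (proj_apply_mem_socIn hdec hs i)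
  · simp

variable [IsAtomic (Submodule R M)]

theorem disjoint_range_sum_proj_ker_sum_proj_comp
    (hsoc : SocOrthogonal 𝕄) (φ : Module.End R M)
    {T : Finset ι} (hT : ∀ j ∈ T, ∀ x ∈ 𝕄 j, proj hdec j (φ x) = 0 → x = 0) :
    Disjoint (range (∑ j ∈ T, proj hdec j)) (ker ((∑ j ∈ T, proj hdec j) ∘ₗ φ)) := by
  rw [disjoint_iff]
  refine eq_bot_of_socIn_eq_bot (eq_bot_iff.mpr fun s hs => ?_)
  have htop := socIn_mono le_top hs
  have hrange : s ∈ range (∑ j ∈ T, proj hdec j) := (socIn_le _ hs).1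
  have hker : (∑ j ∈ T, proj hdec j) (φ s) = 0 := (socIn_le _ hs).2
  refine (Submodule.mem_bot R).mpr (eq_zero_of_forall_proj_apply_eq_zero hdec fun j => ?_)
  by_cases hj : j ∈ T
  · refine hT j hj _ (proj_apply_mem hdec j s) ?_
    rw [← proj_map_eq_proj_map_proj_of_mem_socIn hdec hsoc φ htop,
      ← proj_sum_proj_apply_of_mem hdec hj, hker, map_zero]
  · obtain ⟨y, rfl⟩ := hrange
    exact proj_sum_proj_apply_of_notMem hdec hj y

theorem essentialIn_ker_ker_sum_proj_comp
    (hsoc : SocOrthogonal 𝕄) (φ : Module.End R M)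
    {T : Finset ι} (hT : ∀ j ∉ T, socIn (𝕄 j) ≤ ker (proj hdec j ∘ₗ φ)) :
    EssentialIn (ker φ) (ker ((∑ j ∈ T, proj hdec j) ∘ₗ φ)) := by
  refine essentialIn_of_socIn_le (ker_le_ker_comp _ _) fun s hs => ?_
  have htop := socIn_mono le_top hs
  have hker : (∑ j ∈ T, proj hdec j) (φ s) = 0 := socIn_le _ hs
  refine eq_zero_of_forall_proj_apply_eq_zero hdec fun j => ?_
  by_cases hj : j ∈ T
  · rw [← proj_sum_proj_apply_of_mem hdec hj, hker, map_zero]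
  · rw [proj_map_eq_proj_map_proj_of_mem_socIn hdec hsoc φ htop]
    exact hT j hj (proj_apply_mem_socIn hdec htop j)

end Decomposition

theorem finiteLength_socOrthogonal_indecomposable_csRickart_general
    {R : Type*} [Ring R] {M : Type*} [AddCommGroup M] [Module R M]
    [IsArtinian R M]
    {n : ℕ} (𝕄 : Fin n → Submodule R M) (hdec : DirectSum.IsInternal 𝕄)
    (hsoc : ∀ i j, i ≠ j → ∀ φ : socIn (𝕄 i) →ₗ[R] socIn (𝕄 j), φ = 0)
    (hind : ∀ i, IsIndecomposableModule R (𝕄 i))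
    (hcs : ∀ i, IsCSRickart R (𝕄 i)) :
    IsCSRickart R M := by
  classical
  refine isCSRickart_of_exists_isCompl fun φ => ?_
  let T := Finset.univ.filter fun j => ∀ x ∈ 𝕄 j, proj hdec j (φ x) = 0 → x = 0
  have hTc : ∀ j ∉ T, socIn (𝕄 j) ≤ ker (proj hdec j ∘ₗ φ) := fun j hj =>
    (injOn_or_socIn_le_ker (hind j) (hcs j) _ fun x _ => proj_apply_mem hdec j (φ x)).resolve_left
      (by simpa [T] using hj)
  have hT : ∀ j ∈ T, ∀ x ∈ 𝕄 j, proj hdec j (φ x) = 0 → x = 0 := fun j hj => by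
    simpa [T] using hj
  exact ⟨_, _, isCompl_ker_of_range_le_of_disjoint (range_comp_le_range _ _)
      (disjoint_range_sum_proj_ker_sum_proj_comp hdec hsoc φ hT),
    essentialIn_ker_ker_sum_proj_comp hdec hsoc φ hTc⟩

/-- If `M = M₁ ⊕ … ⊕ Mₙ` has finite length, `Hom(Soc(Mᵢ), Soc(Mⱼ)) = 0` for all
`i ≠ j`, and each `Mᵢ` is an indecomposable CS-Rickart module, then `M` is
CS-Rickart. -/
theorem finiteLength_socOrthogonal_indecomposable_csRickart
    {R : Type*} [Ring R] {M : Type*} [AddCommGroup M] [Module R M]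
    [IsNoetherian R M] [IsArtinian R M]
    {n : ℕ} (𝕄 : Fin n → Submodule R M) (hdec : DirectSum.IsInternal 𝕄)
    (hsoc : ∀ i j, i ≠ j → ∀ φ : socIn (𝕄 i) →ₗ[R] socIn (𝕄 j), φ = 0)
    (hind : ∀ i, IsIndecomposableModule R (𝕄 i))
    (hcs : ∀ i, IsCSRickart R (𝕄 i)) :
    IsCSRickart R M :=
  finiteLength_socOrthogonal_indecomposable_csRickart_general 𝕄 hdec hsoc hind hcs

end CSRickartPaper
end
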